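/- Let Ī₁, Ī₂, Ī₃, J₃, m, g, h̄ be positive real constants and χ ∈ ℝ³, set Ω(Π,l) = (Π₁/Ī₁, Π₂/Ī₂, (Π₃−l)/Ī₃) and h(Π,Γ,α,l) = (1/2)[Π₁²/Ī₁ + Π₂²/Ī₂ + (Π₃−l)²/Ī₃ + l²/J₃] + m g h̄ ⟨Γ,χ⟩. Suppose Π, Γ : ℝ → ℝ³ and α, l : ℝ → ℝ are differentiable and for all t satisfy Π'(t) = Π(t) × Ω(Π(t),l(t)) + m g h̄ (Γ(t) × χ), Γ'(t) = Γ(t) × Ω(Π(t),l(t)), α'(t) = −(Π₃(t)−l(t))/Ī₃ + l(t)/J₃, and l'(t) = 0. Then the function t ↦ h(Π(t),Γ(t),α(t),l(t)) is constant. -/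

import Mathlib

/-!
Along the flow, the time derivative of the reduced Hamiltonian is
`⟨Ω, Π'⟩ + m g h̄ ⟨Γ', χ⟩ = ⟨Ω, Π × Ω⟩ + m g h̄ (⟨Ω, Γ × χ⟩ + ⟨Γ × Ω, χ⟩)`,
since `l' = 0` and `Ω` is the gradient of the kinetic energy in `Π`. The first term vanishes
because `Π × Ω ⟂ Ω`, the bracket because the scalar triple product is alternating.
-/

def cross3 (a b : Fin 3 → ℝ) : Fin 3 → ℝ :=
  ![a 1 * b 2 - a 2 * b 1, a 2 * b 0 - a 0 * b 2, a 0 * b 1 - a 1 * b 0]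

def dot3 (a b : Fin 3 → ℝ) : ℝ := a 0 * b 0 + a 1 * b 1 + a 2 * b 2

theorem dot3_cross3_self_right (a b : Fin 3 → ℝ) : dot3 b (cross3 a b) = 0 := by
  simp only [dot3, cross3, Matrix.cons_val_zero, Matrix.cons_val_one, Matrix.cons_val_two,
    Matrix.head_cons, Matrix.tail_cons]
  ring

theorem dot3_cross3_eq_neg_dot3_cross3 (a b c : Fin 3 → ℝ) :
    dot3 a (cross3 b c) = -dot3 (cross3 b a) c := by
  simp only [dot3, cross3, Matrix.cons_val_zero, Matrix.cons_val_one, Matrix.cons_val_two,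
    Matrix.head_cons, Matrix.tail_cons]
  ring

theorem dot3_cross3_add_mul_cross3_add_mul_dot3_cross3_eq_zero (p w Γ χ : Fin 3 → ℝ) (c : ℝ) :
    dot3 w (fun i => cross3 p w i + c * cross3 Γ χ i) + c * dot3 (cross3 Γ w) χ = 0 := by
  calc dot3 w (fun i => cross3 p w i + c * cross3 Γ χ i) + c * dot3 (cross3 Γ w) χ
      = dot3 w (cross3 p w) + c * (dot3 w (cross3 Γ χ) + dot3 (cross3 Γ w) χ) := by
        simp only [dot3]
        ring
    _ = 0 := by
        rw [dot3_cross3_self_right, dot3_cross3_eq_neg_dot3_cross3]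
        ring

theorem HasDerivAt.dot3_const {u : ℝ → Fin 3 → ℝ} {u' : Fin 3 → ℝ} {t : ℝ}
    (hu : HasDerivAt u u' t) (c : Fin 3 → ℝ) :
    HasDerivAt (fun s => dot3 (u s) c) (dot3 u' c) t := by
  have hu_i := fun i => hasDerivAt_pi.mp hu i
  exact (((hu_i 0).mul_const (c 0)).add ((hu_i 1).mul_const (c 1))).add
    ((hu_i 2).mul_const (c 2))

section RigidBodyWithRotor

variable (I1 I2 I3 J3 : ℝ)

noncomputable def angularVelocity (P : Fin 3 → ℝ) (l : ℝ) : Fin 3 → ℝ :=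
  ![P 0 / I1, P 1 / I2, (P 2 - l) / I3]

noncomputable def kineticEnergy (P : Fin 3 → ℝ) (l : ℝ) : ℝ :=
  (1/2) * ((P 0)^2 / I1 + (P 1)^2 / I2 + (P 2 - l)^2 / I3 + l^2 / J3)

theorem hasDerivAt_kineticEnergy {P : ℝ → Fin 3 → ℝ} {l : ℝ → ℝ} {P' : Fin 3 → ℝ} {t : ℝ}
    (hP : HasDerivAt P P' t) (hl : HasDerivAt l 0 t) :
    HasDerivAt (fun s => kineticEnergy I1 I2 I3 J3 (P s) (l s))
      (dot3 (angularVelocity I1 I2 I3 (P t) (l t)) P') t := by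
  have hP_i := fun i => hasDerivAt_pi.mp hP i
  have hT := ((((((hP_i 0).pow 2).div_const I1).add (((hP_i 1).pow 2).div_const I2)).add
      ((((hP_i 2).sub hl).pow 2).div_const I3)).add ((hl.pow 2).div_const J3)).const_mul
      (1/2 : ℝ)
  refine hT.congr_deriv ?_
  simp only [dot3, angularVelocity, Matrix.cons_val_zero, Matrix.cons_val_one,
    Matrix.cons_val_two, Matrix.head_cons, Matrix.tail_cons, Pi.sub_apply]
  ring

end RigidBodyWithRotor

theorem spacecraft_rotor_energy_conservation_noncoincident_general
    (I1 I2 I3 J3 m g hb : ℝ)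
    (χ : Fin 3 → ℝ)
    (Ω : (Fin 3 → ℝ) → ℝ → Fin 3 → ℝ)
    (hΩ : Ω = fun P l => ![P 0 / I1, P 1 / I2, (P 2 - l) / I3])
    (h : (Fin 3 → ℝ) → (Fin 3 → ℝ) → ℝ → ℝ → ℝ)
    (hh : h = fun P G α l => (1/2) * ((P 0)^2 / I1 + (P 1)^2 / I2
      + (P 2 - l)^2 / I3 + l^2 / J3) + m * g * hb * dot3 G χ)
    (P G : ℝ → Fin 3 → ℝ) (α : ℝ → ℝ) (l : ℝ → ℝ)
    (hP : ∀ t, HasDerivAt P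
      (fun i => cross3 (P t) (Ω (P t) (l t)) i + m * g * hb * cross3 (G t) χ i) t)
    (hG : ∀ t, HasDerivAt G (cross3 (G t) (Ω (P t) (l t))) t)
    (hl : ∀ t, HasDerivAt l 0 t) :
    ∀ t₁ t₂ : ℝ, h (P t₁) (G t₁) (α t₁) (l t₁) = h (P t₂) (G t₂) (α t₂) (l t₂) := by
  obtain rfl : Ω = angularVelocity I1 I2 I3 := hΩ
  obtain rfl : h = fun P G _ l => kineticEnergy I1 I2 I3 J3 P l + m * g * hb * dot3 G χ := hh
  have hE : ∀ t, HasDerivAt (fun t => kineticEnergy I1 I2 I3 J3 (P t) (l t)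
      + m * g * hb * dot3 (G t) χ) 0 t := fun t =>
    ((hasDerivAt_kineticEnergy I1 I2 I3 J3 (hP t) (hl t)).add
      (((hG t).dot3_const χ).const_mul (m * g * hb))).congr_deriv
      (dot3_cross3_add_mul_cross3_add_mul_dot3_cross3_eq_zero _ _ _ _ _)
  exact is_const_of_deriv_eq_zero (fun t => (hE t).differentiableAt) (fun t => (hE t).deriv)

/-- Conservation of energy for the reduced spacecraft-rotor system with non-coincident
centers of buoyancy and gravity and zero control torque: along solutions of
`Π' = Π × Ω + mgh̄(Γ × χ)`, `Γ' = Γ × Ω`, `α' = −(Π₃−l)/Ī₃ + l/J₃`, `l' = 0`,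
the reduced Hamiltonian is constant. -/
theorem spacecraft_rotor_energy_conservation_noncoincident
    (I1 I2 I3 J3 m g hb : ℝ)
    (hI1 : 0 < I1) (hI2 : 0 < I2) (hI3 : 0 < I3) (hJ3 : 0 < J3)
    (hm : 0 < m) (hg : 0 < g) (hhb : 0 < hb) (χ : Fin 3 → ℝ)
    (Ω : (Fin 3 → ℝ) → ℝ → Fin 3 → ℝ)
    (hΩ : Ω = fun P l => ![P 0 / I1, P 1 / I2, (P 2 - l) / I3])
    (h : (Fin 3 → ℝ) → (Fin 3 → ℝ) → ℝ → ℝ → ℝ)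
    (hh : h = fun P G α l => (1/2) * ((P 0)^2 / I1 + (P 1)^2 / I2
      + (P 2 - l)^2 / I3 + l^2 / J3) + m * g * hb * dot3 G χ)
    (P G : ℝ → Fin 3 → ℝ) (α : ℝ → ℝ) (l : ℝ → ℝ)
    (hP : ∀ t, HasDerivAt P
      (fun i => cross3 (P t) (Ω (P t) (l t)) i + m * g * hb * cross3 (G t) χ i) t)
    (hG : ∀ t, HasDerivAt G (cross3 (G t) (Ω (P t) (l t))) t)
    (hα : ∀ t, HasDerivAt α (-(P t 2 - l t) / I3 + l t / J3) t)
    (hl : ∀ t, HasDerivAt l 0 t) :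
    ∀ t₁ t₂ : ℝ, h (P t₁) (G t₁) (α t₁) (l t₁) = h (P t₂) (G t₂) (α t₂) (l t₂) :=
  spacecraft_rotor_energy_conservation_noncoincident_general I1 I2 I3 J3 m g hb χ Ω hΩ h hh P G α l
    hP hG hl
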